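/- Let n ≥ 1 and consider the operator L̃u = Δu + b·∇u + cu on ℝ^n, where the real part of the vector field b belongs to W^{1,1}_loc(ℝ^n)^n, the imaginary part of b is locally integrable, and c is a complex-valued locally integrable function. Set q = Re c − (1/2) div(Re b) (which is locally integrable) and d = (1/2) Im b. Then −L̃ is accretive, i.e., ∫_{ℝ^n} |∇u|² dx − Re ∫_{ℝ^n} (b·∇u) ū dx − ∫_{ℝ^n} (Re c) |u|² dx ≥ 0 for every complex-valued test function u, if and only if the following two conditions hold: (i) ∫_{ℝ^n} (|∇h|² − q h²) dx ≥ 0 for every real-valued test function h; and (ii) |∫_{ℝ^n} d·(u∇v − v∇u) dx| ≤ [u]_H [v]_H for all real-valued test functions u, v, where [h]_H² := ∫_{ℝ^n} (|∇h|² − q h²) dx. -/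

import Mathlib

open MeasureTheory Metric

noncomputable section

/-- Partial derivative `∂ⱼ u (x)` of a complex-valued function on `ℝⁿ`. -/
def pdC {n : ℕ} (u : (Fin n → ℝ) → ℂ) (j : Fin n) (x : Fin n → ℝ) : ℂ :=
  fderiv ℝ u x (Pi.single j 1)

/-- Partial derivative `∂ⱼ u (x)` of a real-valued function on `ℝⁿ`. -/
def pdR {n : ℕ} (u : (Fin n → ℝ) → ℝ) (j : Fin n) (x : Fin n → ℝ) : ℝ :=
  fderiv ℝ u x (Pi.single j 1)

/-- Complex-valued test function: smooth with compact support. -/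
def IsTestC {n : ℕ} (u : (Fin n → ℝ) → ℂ) : Prop :=
  ContDiff ℝ (⊤ : ℕ∞) u ∧ HasCompactSupport u

/-- Real-valued test function: smooth with compact support. -/
def IsTestR {n : ℕ} (u : (Fin n → ℝ) → ℝ) : Prop :=
  ContDiff ℝ (⊤ : ℕ∞) u ∧ HasCompactSupport u

namespace AccAux

open Complex

variable {n : ℕ}

lemma pdR_cont {u : (Fin n → ℝ) → ℝ} (h : IsTestR u) (j : Fin n) :
    Continuous (pdR u j) :=
  (h.1.continuous_fderiv (by simp)).clm_apply continuous_const

lemma pdR_supp {u : (Fin n → ℝ) → ℝ} (h : IsTestR u) (j : Fin n) :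
    HasCompactSupport (pdR u j) :=
  h.2.fderiv_apply ℝ (Pi.single j 1)

lemma pdC_cont {u : (Fin n → ℝ) → ℂ} (h : IsTestC u) (j : Fin n) :
    Continuous (pdC u j) :=
  (h.1.continuous_fderiv (by simp)).clm_apply continuous_const

lemma pdC_supp {u : (Fin n → ℝ) → ℂ} (h : IsTestC u) (j : Fin n) :
    HasCompactSupport (pdC u j) :=
  h.2.fderiv_apply ℝ (Pi.single j 1)

lemma isTestR_mul {u v : (Fin n → ℝ) → ℝ} (hu : IsTestR u) (hv : IsTestR v) :
    IsTestR (fun x => u x * v x) :=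
  ⟨hu.1.mul hv.1, hu.2.mul_right⟩

lemma isTestR_re {u : (Fin n → ℝ) → ℂ} (hu : IsTestC u) :
    IsTestR (fun x => (u x).re) :=
  ⟨Complex.reCLM.contDiff.comp hu.1, hu.2.comp_left (g := Complex.re) rfl⟩

lemma isTestR_im {u : (Fin n → ℝ) → ℂ} (hu : IsTestC u) :
    IsTestR (fun x => (u x).im) :=
  ⟨Complex.imCLM.contDiff.comp hu.1, hu.2.comp_left (g := Complex.im) rfl⟩

lemma pdC_re_im {u : (Fin n → ℝ) → ℂ} (hu : IsTestC u) (j : Fin n) (x : Fin n → ℝ) :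
    pdC u j x = (pdR (fun y => (u y).re) j x : ℂ) + (pdR (fun y => (u y).im) j x : ℂ) * I := by
  have hd : DifferentiableAt ℝ u x := (hu.1.differentiable (by simp)) x
  have hre : fderiv ℝ (fun y => (u y).re) x = Complex.reCLM.comp (fderiv ℝ u x) := by
    rw [show (fun y => (u y).re) = Complex.reCLM ∘ u from rfl,
      fderiv_comp x Complex.reCLM.differentiableAt hd, Complex.reCLM.fderiv]
  have him : fderiv ℝ (fun y => (u y).im) x = Complex.imCLM.comp (fderiv ℝ u x) := by
    rw [show (fun y => (u y).im) = Complex.imCLM ∘ u from rfl,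
      fderiv_comp x Complex.imCLM.differentiableAt hd, Complex.imCLM.fderiv]
  simp only [pdC, pdR, hre, him, ContinuousLinearMap.comp_apply, Complex.reCLM_apply,
    Complex.imCLM_apply]
  exact (Complex.re_add_im _).symm

lemma pdR_mul {u v : (Fin n → ℝ) → ℝ} (hu : IsTestR u) (hv : IsTestR v)
    (j : Fin n) (x : Fin n → ℝ) :
    pdR (fun y => u y * v y) j x = u x * pdR v j x + v x * pdR u j x := by
  have hdu : DifferentiableAt ℝ u x := (hu.1.differentiable (by simp)) x
  have hdv : DifferentiableAt ℝ v x := (hv.1.differentiable (by simp)) x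
  simp only [pdR, fderiv_fun_mul hdu hdv, ContinuousLinearMap.add_apply,
    ContinuousLinearMap.smul_apply, smul_eq_mul]

lemma pdR_const_mul (t : ℝ) {u : (Fin n → ℝ) → ℝ} (hu : IsTestR u)
    (j : Fin n) (x : Fin n → ℝ) :
    pdR (fun y => t * u y) j x = t * pdR u j x := by
  have hdu : DifferentiableAt ℝ u x := (hu.1.differentiable (by simp)) x
  simp only [pdR, fderiv_const_mul hdu, ContinuousLinearMap.smul_apply, smul_eq_mul]

lemma isTestR_const_mul (t : ℝ) {u : (Fin n → ℝ) → ℝ} (hu : IsTestR u) :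
    IsTestR (fun x => t * u x) :=
  ⟨contDiff_const.mul hu.1, by
    have := hu.2.smul_left (M := ℝ) (f' := u) (f := fun _ => t)
    exact this⟩

lemma integrable_loc_mul {w : (Fin n → ℝ) → ℝ} (hw : LocallyIntegrable w volume)
    {φ : (Fin n → ℝ) → ℝ} (hc : Continuous φ) (hs : HasCompactSupport φ) :
    Integrable (fun x => w x * φ x) volume := by
  simpa [smul_eq_mul] using hw.integrable_smul_right_of_hasCompactSupport hc hs

lemma locInt_re {w : (Fin n → ℝ) → ℂ} (hw : LocallyIntegrable w volume) :
    LocallyIntegrable (fun x => (w x).re) volume := by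
  intro x
  obtain ⟨s, hs, hi⟩ := hw x
  exact ⟨s, hs, Complex.reCLM.integrable_comp hi⟩

lemma locInt_im {w : (Fin n → ℝ) → ℂ} (hw : LocallyIntegrable w volume) :
    LocallyIntegrable (fun x => (w x).im) volume := by
  intro x
  obtain ⟨s, hs, hi⟩ := hw x
  exact ⟨s, hs, Complex.imCLM.integrable_comp hi⟩

lemma integrable_locC_mul {w : (Fin n → ℝ) → ℂ} (hw : LocallyIntegrable w volume)
    {φ : (Fin n → ℝ) → ℂ} (hc : Continuous φ) (hs : HasCompactSupport φ) :
    Integrable (fun x => w x * φ x) volume := by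
  have h1 : Integrable (fun x => (w x).re • φ x) volume :=
    (locInt_re hw).integrable_smul_right_of_hasCompactSupport hc hs
  have h2 : Integrable (fun x => (w x).im • (I * φ x)) volume :=
    (locInt_im hw).integrable_smul_right_of_hasCompactSupport
      (continuous_const.mul hc) (hs.mul_left)
  have : (fun x => w x * φ x) =
      fun x => (w x).re • φ x + (w x).im • (I * φ x) := by
    funext x
    simp only [Complex.real_smul]
    conv_lhs => rw [← Complex.re_add_im (w x)]
    ring
  rw [this]
  exact h1.add h2

end AccAux

namespace AccAux

open Complex

variable {n : ℕ}
  {b : Fin n → (Fin n → ℝ) → ℂ} {c : (Fin n → ℝ) → ℂ}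
  {g : Fin n → Fin n → (Fin n → ℝ) → ℝ}
  {q : (Fin n → ℝ) → ℝ}
  {Q : ((Fin n → ℝ) → ℝ) → ℝ}

/-- Integration by parts: `∫ Re bⱼ · (h ∂ⱼh) = -(1/2) ∫ gⱼⱼ h²`. -/
lemma bpart
    (hgder : ∀ j k, ∀ φ : (Fin n → ℝ) → ℝ, IsTestR φ →
      ∫ x, (b j x).re * pdR φ k x = - ∫ x, g j k x * φ x)
    {h : (Fin n → ℝ) → ℝ} (hh : IsTestR h) (j : Fin n) :
    ∫ x, (b j x).re * (h x * pdR h j x) = -(1/2) * ∫ x, g j j x * h x ^ 2 := by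
  have hsq : IsTestR (fun x => h x * h x) := isTestR_mul hh hh
  have key := hgder j j (fun x => h x * h x) hsq
  have e1 : (fun x => (b j x).re * pdR (fun y => h y * h y) j x)
      = fun x => 2 * ((b j x).re * (h x * pdR h j x)) := by
    funext x
    rw [pdR_mul hh hh]
    ring
  rw [e1, integral_const_mul] at key
  have e2 : (fun x => g j j x * h x ^ 2) = fun x => g j j x * (h x * h x) := by
    funext x; ring_nf
  rw [e2]
  linarith [key]

/-- `Q h` splits into three integrals. -/
lemma Q_split
    (hcloc : LocallyIntegrable c volume)
    (hgloc : ∀ j k, LocallyIntegrable (g j k) volume)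
    (hq : q = fun x => (c x).re - (1 / 2) * ∑ j, g j j x)
    (hQ : Q = fun h => ∫ x, ((∑ j, (pdR h j x) ^ 2) - q x * (h x) ^ 2))
    {h : (Fin n → ℝ) → ℝ} (hh : IsTestR h) :
    Q h = (∫ x, ∑ j, (pdR h j x) ^ 2) - (∫ x, (c x).re * h x ^ 2)
        + (1/2) * ∑ j, ∫ x, g j j x * h x ^ 2 := by
  have hsqc : Continuous (fun x => h x ^ 2) := by
    have := hh.1.continuous
    continuity
  have hsqs : HasCompactSupport (fun x => h x ^ 2) := by
    have : (fun x => h x ^ 2) = fun x => h x * h x := by funext x; ring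
    rw [this]; exact hh.2.mul_right
  have int1 : Integrable (fun x => ∑ j, (pdR h j x) ^ 2) volume := by
    apply integrable_finset_sum
    intro j _
    exact ((pdR_cont hh j).pow 2).integrable_of_hasCompactSupport
      (by
        have : (fun x => (pdR h j x) ^ 2) = fun x => pdR h j x * pdR h j x := by
          funext x; ring
        rw [sq]; exact (pdR_supp hh j).mul_right)
  have intc : Integrable (fun x => (c x).re * h x ^ 2) volume :=
    integrable_loc_mul (locInt_re hcloc) hsqc hsqs
  have intg : ∀ j : Fin n, Integrable (fun x => g j j x * h x ^ 2) volume := fun j =>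
    integrable_loc_mul (hgloc j j) hsqc hsqs
  have intq : Integrable (fun x => q x * h x ^ 2) volume := by
    have : (fun x => q x * h x ^ 2)
        = fun x => (c x).re * h x ^ 2 - ∑ j, (1/2) * (g j j x * h x ^ 2) := by
      funext x
      rw [hq, sub_mul, mul_assoc, Finset.sum_mul, Finset.mul_sum]
    rw [this]
    exact intc.sub (integrable_finset_sum _ (fun j _ => (intg j).const_mul _))
  have : Q h = (∫ x, ∑ j, (pdR h j x) ^ 2) - ∫ x, q x * h x ^ 2 := by
    rw [hQ]
    exact integral_sub int1 intq
  rw [this]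
  have : ∫ x, q x * h x ^ 2
      = (∫ x, (c x).re * h x ^ 2) - (1/2) * ∑ j, ∫ x, g j j x * h x ^ 2 := by
    have e : (fun x => q x * h x ^ 2)
        = fun x => (c x).re * h x ^ 2 - ∑ j, (1/2) * (g j j x * h x ^ 2) := by
      funext x
      rw [hq, sub_mul, mul_assoc, Finset.sum_mul, Finset.mul_sum]
    rw [e, integral_sub intc (integrable_finset_sum _ (fun j _ => (intg j).const_mul _)),
      integral_finset_sum _ (fun j _ => (intg j).const_mul _)]
    rw [Finset.mul_sum]
    congr 1
    apply Finset.sum_congr rfl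
    intro j _
    rw [integral_const_mul]
  rw [this]
  ring

end AccAux

namespace AccAux

open Complex

variable {n : ℕ}
  {b : Fin n → (Fin n → ℝ) → ℂ} {c : (Fin n → ℝ) → ℂ}
  {g : Fin n → Fin n → (Fin n → ℝ) → ℝ}
  {q : (Fin n → ℝ) → ℝ} {d : Fin n → (Fin n → ℝ) → ℝ}
  {Q : ((Fin n → ℝ) → ℝ) → ℝ}

lemma sq_cont {h : (Fin n → ℝ) → ℝ} (hh : IsTestR h) : Continuous (fun x => h x ^ 2) :=
  (hh.1.continuous).pow 2

lemma sq_supp {h : (Fin n → ℝ) → ℝ} (hh : IsTestR h) : HasCompactSupport (fun x => h x ^ 2) := by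
  have : (fun x => h x ^ 2) = fun x => h x * h x := by funext x; ring
  rw [this]; exact hh.2.mul_right

lemma integrable_sum_sq {h : (Fin n → ℝ) → ℝ} (hh : IsTestR h) :
    Integrable (fun x => ∑ j, (pdR h j x) ^ 2) volume := by
  apply integrable_finset_sum
  intro j _
  apply ((pdR_cont hh j).pow 2).integrable_of_hasCompactSupport
  have : (fun x => (pdR h j x) ^ 2) = fun x => pdR h j x * pdR h j x := by funext x; ring
  rw [sq]; exact (pdR_supp hh j).mul_right

/-- The key identity: the accretivity form applied to `u` equals
`Q (Re u) + Q (Im u) + 2 D(Re u, Im u)`. -/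
lemma key
    (hbloc : ∀ j, LocallyIntegrable (b j) volume)
    (hcloc : LocallyIntegrable c volume)
    (hgloc : ∀ j k, LocallyIntegrable (g j k) volume)
    (hgder : ∀ j k, ∀ φ : (Fin n → ℝ) → ℝ, IsTestR φ →
      ∫ x, (b j x).re * pdR φ k x = - ∫ x, g j k x * φ x)
    (hq : q = fun x => (c x).re - (1 / 2) * ∑ j, g j j x)
    (hd : d = fun j x => (1 / 2) * (b j x).im)
    (hQ : Q = fun h => ∫ x, ((∑ j, (pdR h j x) ^ 2) - q x * (h x) ^ 2))
    (u : (Fin n → ℝ) → ℂ) (hu : IsTestC u) :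
    (∫ x, ∑ j, ‖pdC u j x‖ ^ 2)
      - (∫ x, (∑ j, b j x * pdC u j x) * star (u x)).re
      - ∫ x, (c x).re * ‖u x‖ ^ 2
    = Q (fun x => (u x).re) + Q (fun x => (u x).im)
      + 2 * ∫ x, ∑ j, d j x * ((u x).re * pdR (fun y => (u y).im) j x
          - (u x).im * pdR (fun y => (u y).re) j x) := by
  set f : (Fin n → ℝ) → ℝ := fun x => (u x).re with hfdef
  set gg : (Fin n → ℝ) → ℝ := fun x => (u x).im with hggdef
  have hf : IsTestR f := isTestR_re hu
  have hgg : IsTestR gg := isTestR_im hu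
  have pdCu : ∀ (j : Fin n) (x : Fin n → ℝ),
      pdC u j x = (pdR f j x : ℂ) + (pdR gg j x : ℂ) * I := fun j x => pdC_re_im hu j x
  -- Term 1
  have term1 : (∫ x, ∑ j, ‖pdC u j x‖ ^ 2)
      = (∫ x, ∑ j, (pdR f j x) ^ 2) + ∫ x, ∑ j, (pdR gg j x) ^ 2 := by
    rw [← integral_add (integrable_sum_sq hf) (integrable_sum_sq hgg)]
    congr 1
    funext x
    rw [← Finset.sum_add_distrib]
    apply Finset.sum_congr rfl
    intro j _
    rw [pdCu j x, Complex.sq_norm, Complex.normSq_add_mul_I]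
  -- Term 3
  have intcf : Integrable (fun x => (c x).re * f x ^ 2) volume :=
    integrable_loc_mul (locInt_re hcloc) (sq_cont hf) (sq_supp hf)
  have intcg : Integrable (fun x => (c x).re * gg x ^ 2) volume :=
    integrable_loc_mul (locInt_re hcloc) (sq_cont hgg) (sq_supp hgg)
  have term3 : (∫ x, (c x).re * ‖u x‖ ^ 2)
      = (∫ x, (c x).re * f x ^ 2) + ∫ x, (c x).re * gg x ^ 2 := by
    rw [← integral_add intcf intcg]
    congr 1
    funext x
    rw [Complex.sq_norm, Complex.normSq_apply]
    simp only [hfdef, hggdef]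
    ring
  -- Term 2
  have intT1 : ∀ j : Fin n, Integrable (fun x => (b j x).re * (f x * pdR f j x)) volume :=
    fun j => integrable_loc_mul (locInt_re (hbloc j))
      ((hf.1.continuous).mul (pdR_cont hf j)) (hf.2.mul_right)
  have intT2 : ∀ j : Fin n, Integrable (fun x => (b j x).re * (gg x * pdR gg j x)) volume :=
    fun j => integrable_loc_mul (locInt_re (hbloc j))
      ((hgg.1.continuous).mul (pdR_cont hgg j)) (hgg.2.mul_right)
  have intT3 : ∀ j : Fin n, Integrable
      (fun x => (b j x).im * (f x * pdR gg j x - gg x * pdR f j x)) volume := by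
    intro j
    apply integrable_loc_mul (locInt_im (hbloc j))
    · exact ((hf.1.continuous).mul (pdR_cont hgg j)).sub ((hgg.1.continuous).mul (pdR_cont hf j))
    · have h1 : HasCompactSupport (fun x => f x * pdR gg j x) := hf.2.mul_right
      have h2 : HasCompactSupport (fun x => gg x * pdR f j x) := hgg.2.mul_right
      have : (fun x => f x * pdR gg j x - gg x * pdR f j x)
          = fun x => f x * pdR gg j x + -(gg x * pdR f j x) := by
        funext x; ring
      rw [this]
      exact h1.add (h2.comp_left neg_zero)
  have intW : Integrable (fun x => ∑ j, b j x * (pdC u j x * star (u x))) volume := by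
    apply integrable_finset_sum
    intro j _
    apply integrable_locC_mul (hbloc j)
    · exact (pdC_cont hu j).mul (hu.1.continuous.star)
    · exact (pdC_supp hu j).mul_right
  have term2 : (∫ x, (∑ j, b j x * pdC u j x) * star (u x)).re
      = ∑ j, ((∫ x, (b j x).re * (f x * pdR f j x))
            + (∫ x, (b j x).re * (gg x * pdR gg j x))
            - ∫ x, (b j x).im * (f x * pdR gg j x - gg x * pdR f j x)) := by
    have e0 : (fun x => (∑ j, b j x * pdC u j x) * star (u x))
        = fun x => ∑ j, b j x * (pdC u j x * star (u x)) := by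
      funext x
      rw [Finset.sum_mul]
      exact Finset.sum_congr rfl fun j _ => mul_assoc _ _ _
    rw [e0]
    have hre : (∫ x, ∑ j, b j x * (pdC u j x * star (u x))).re
        = ∫ x, ((∑ j, b j x * (pdC u j x * star (u x))) : ℂ).re := by
      have := Complex.reCLM.integral_comp_comm intW
      simpa using this.symm
    rw [hre]
    have e1 : (fun x => ((∑ j, b j x * (pdC u j x * star (u x))) : ℂ).re)
        = fun x => ∑ j, ((b j x).re * (f x * pdR f j x)
            + (b j x).re * (gg x * pdR gg j x)
            - (b j x).im * (f x * pdR gg j x - gg x * pdR f j x)) := by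
      funext x
      rw [Complex.re_sum]
      apply Finset.sum_congr rfl
      intro j _
      rw [pdCu j x]
      simp only [Complex.mul_re, Complex.mul_im, Complex.add_re, Complex.add_im,
        Complex.ofReal_re, Complex.ofReal_im, Complex.I_re, Complex.I_im,
        Complex.star_def, Complex.conj_re, Complex.conj_im, hfdef, hggdef]
      ring
    have intSum : ∀ j ∈ Finset.univ, Integrable (fun x =>
        (b j x).re * (f x * pdR f j x) + (b j x).re * (gg x * pdR gg j x)
          - (b j x).im * (f x * pdR gg j x - gg x * pdR f j x)) volume :=
      fun j _ => by exact ((intT1 j).add (intT2 j)).sub (intT3 j)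
    rw [e1, integral_finset_sum _ intSum]
    apply Finset.sum_congr rfl
    intro j _
    have hint12 : Integrable (fun x =>
        (b j x).re * (f x * pdR f j x) + (b j x).re * (gg x * pdR gg j x)) volume :=
      by exact (intT1 j).add (intT2 j)
    rw [integral_sub hint12 (intT3 j), integral_add (intT1 j) (intT2 j)]
  -- apply integration by parts
  have ibp1 : ∀ j : Fin n, ∫ x, (b j x).re * (f x * pdR f j x)
      = -(1/2) * ∫ x, g j j x * f x ^ 2 := fun j => bpart hgder hf j
  have ibp2 : ∀ j : Fin n, ∫ x, (b j x).re * (gg x * pdR gg j x)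
      = -(1/2) * ∫ x, g j j x * gg x ^ 2 := fun j => bpart hgder hgg j
  -- the d-term
  have dterm : (∫ x, ∑ j, d j x * (f x * pdR gg j x - gg x * pdR f j x))
      = (1/2) * ∑ j, ∫ x, (b j x).im * (f x * pdR gg j x - gg x * pdR f j x) := by
    have e : (fun x => ∑ j, d j x * (f x * pdR gg j x - gg x * pdR f j x))
        = fun x => ∑ j, (1/2) * ((b j x).im * (f x * pdR gg j x - gg x * pdR f j x)) := by
      funext x
      apply Finset.sum_congr rfl
      intro j _
      rw [hd]
      ring
    rw [e, integral_finset_sum _ (fun j _ => (intT3 j).const_mul _), Finset.mul_sum]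
    apply Finset.sum_congr rfl
    intro j _
    rw [integral_const_mul]
  -- Q-splittings
  have Qf := Q_split hcloc hgloc hq hQ hf
  have Qg := Q_split hcloc hgloc hq hQ hgg
  -- assemble
  rw [term1, term2, term3, dterm, Qf, Qg]
  rw [Finset.sum_sub_distrib, Finset.sum_add_distrib]
  have e1 : ∑ j, ∫ x, (b j x).re * (f x * pdR f j x)
      = -(1/2) * ∑ j, ∫ x, g j j x * f x ^ 2 := by
    rw [Finset.mul_sum]
    exact Finset.sum_congr rfl fun j _ => by rw [ibp1 j]
  have e2 : ∑ j, ∫ x, (b j x).re * (gg x * pdR gg j x)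
      = -(1/2) * ∑ j, ∫ x, g j j x * gg x ^ 2 := by
    rw [Finset.mul_sum]
    exact Finset.sum_congr rfl fun j _ => by rw [ibp2 j]
  rw [e1, e2]
  ring

end AccAux

namespace AccAux

open Complex

variable {n : ℕ}
  {b : Fin n → (Fin n → ℝ) → ℂ} {c : (Fin n → ℝ) → ℂ}
  {g : Fin n → Fin n → (Fin n → ℝ) → ℝ}
  {q : (Fin n → ℝ) → ℝ} {d : Fin n → (Fin n → ℝ) → ℝ}
  {Q : ((Fin n → ℝ) → ℝ) → ℝ}

lemma Q_scale
    (hQ : Q = fun h => ∫ x, ((∑ j, (pdR h j x) ^ 2) - q x * (h x) ^ 2))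
    (t : ℝ) {h : (Fin n → ℝ) → ℝ} (hh : IsTestR h) :
    Q (fun x => t * h x) = t ^ 2 * Q h := by
  rw [hQ]
  simp only
  rw [← integral_const_mul]
  congr 1
  funext x
  have e : ∀ j : Fin n, (pdR (fun y => t * h y) j x) ^ 2 = t ^ 2 * (pdR h j x) ^ 2 :=
    fun j => by rw [pdR_const_mul t hh]; ring
  rw [Finset.sum_congr rfl (fun j _ => e j), ← Finset.mul_sum]
  ring

lemma D_scale (t s : ℝ) {u v : (Fin n → ℝ) → ℝ} (hu : IsTestR u) (hv : IsTestR v) :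
    (∫ x, ∑ j, d j x * ((t * u x) * pdR (fun y => s * v y) j x
        - (s * v x) * pdR (fun y => t * u y) j x))
      = (t * s) * ∫ x, ∑ j, d j x * (u x * pdR v j x - v x * pdR u j x) := by
  rw [← integral_const_mul]
  congr 1
  funext x
  have e : ∀ j : Fin n, d j x * ((t * u x) * pdR (fun y => s * v y) j x
      - (s * v x) * pdR (fun y => t * u y) j x)
      = (t * s) * (d j x * (u x * pdR v j x - v x * pdR u j x)) := fun j => by
    rw [pdR_const_mul s hv, pdR_const_mul t hu]; ring
  rw [Finset.sum_congr rfl (fun j _ => e j), ← Finset.mul_sum]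

lemma isTestC_mk {f gg : (Fin n → ℝ) → ℝ} (hf : IsTestR f) (hgg : IsTestR gg) :
    IsTestC (fun x => (f x : ℂ) + (gg x : ℂ) * I) := by
  constructor
  · exact (Complex.ofRealCLM.contDiff.comp hf.1).add
      ((Complex.ofRealCLM.contDiff.comp hgg.1).mul contDiff_const)
  · have h1 : HasCompactSupport (fun x => (f x : ℂ)) :=
      hf.2.comp_left (g := Complex.ofReal) Complex.ofReal_zero
    have h2 : HasCompactSupport (fun x => (gg x : ℂ) * I) :=
      (hgg.2.comp_left (g := Complex.ofReal) Complex.ofReal_zero).mul_right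
    exact h1.add h2

lemma aux_ineq (a B D : ℝ) (ha : 0 ≤ a) (hb : 0 ≤ B)
    (H : ∀ t s : ℝ, 0 ≤ t ^ 2 * a + s ^ 2 * B + 2 * t * s * D) :
    |D| ≤ Real.sqrt a * Real.sqrt B := by
  rcases eq_or_lt_of_le ha with h0 | hapos
  · have hD : D = 0 := by
      by_contra hD
      have hkey := H (-(B + 1) / (2 * D)) 1
      rw [← h0] at hkey
      have ht : 2 * (-(B + 1) / (2 * D)) * 1 * D = -(B + 1) := by
        field_simp
      rw [ht] at hkey
      nlinarith
    simp [hD]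
    positivity
  · rcases eq_or_lt_of_le hb with h0b | hbpos
    · have hD : D = 0 := by
        by_contra hD
        have hkey := H 1 (-(a + 1) / (2 * D))
        rw [← h0b] at hkey
        have ht : 2 * 1 * (-(a + 1) / (2 * D)) * D = -(a + 1) := by
          field_simp
        rw [ht] at hkey
        nlinarith
      simp [hD]
      positivity
    · have hsa : Real.sqrt a ^ 2 = a := Real.sq_sqrt ha
      have hsb : Real.sqrt B ^ 2 = B := Real.sq_sqrt hb
      have hsa' : 0 < Real.sqrt a := Real.sqrt_pos.mpr hapos
      have hsb' : 0 < Real.sqrt B := Real.sqrt_pos.mpr hbpos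
      have hX : 0 < Real.sqrt a * Real.sqrt B := mul_pos hsa' hsb'
      have hXX : (Real.sqrt a * Real.sqrt B) ^ 2 = a * B := by rw [mul_pow, hsa, hsb]
      have h1 := H (Real.sqrt B) (-Real.sqrt a)
      have h2 := H (Real.sqrt B) (Real.sqrt a)
      rw [hsb] at h1 h2
      rw [hsa] at h2
      rw [neg_sq, hsa] at h1
      rw [abs_le]
      constructor
      · nlinarith [h2, hXX, hX]
      · nlinarith [h1, hXX, hX]

end AccAux


/-- **Theorem I.** For `L̃ = Δ + b·∇ + c` with `Re b ∈ W^{1,1}_loc` (the distributional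
partials of `Re bⱼ` are the locally integrable functions `g j k`), `Im b, c ∈ L¹_loc`,
`q = Re c - (1/2) div (Re b)`, `d = (1/2) Im b`, the operator `-L̃` is accretive iff
(i) `∫ (|∇h|² - q h²) ≥ 0` for all real test functions `h`, and
(ii) the commutator inequality `|∫ d·(u∇v - v∇u)| ≤ [u]_H [v]_H` holds for all real
test functions `u, v`, where `[h]_H² = ∫ (|∇h|² - q h²)`. -/
theorem statement_0 (n : ℕ) (hn : 1 ≤ n)
    (b : Fin n → (Fin n → ℝ) → ℂ) (c : (Fin n → ℝ) → ℂ)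
    (hbloc : ∀ j, LocallyIntegrable (b j) volume)
    (hcloc : LocallyIntegrable c volume)
    -- `g j k` is the distributional partial derivative `∂ₖ (Re bⱼ)`, locally integrable:
    (g : Fin n → Fin n → (Fin n → ℝ) → ℝ)
    (hgloc : ∀ j k, LocallyIntegrable (g j k) volume)
    (hgder : ∀ j k, ∀ φ : (Fin n → ℝ) → ℝ, IsTestR φ →
      ∫ x, (b j x).re * pdR φ k x = - ∫ x, g j k x * φ x)
    (q : (Fin n → ℝ) → ℝ) (hq : q = fun x => (c x).re - (1 / 2) * ∑ j, g j j x)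
    (d : Fin n → (Fin n → ℝ) → ℝ) (hd : d = fun j x => (1 / 2) * (b j x).im)
    (Q : ((Fin n → ℝ) → ℝ) → ℝ)
    (hQ : Q = fun h => ∫ x, ((∑ j, (pdR h j x) ^ 2) - q x * (h x) ^ 2)) :
    (∀ u : (Fin n → ℝ) → ℂ, IsTestC u →
        0 ≤ (∫ x, ∑ j, ‖pdC u j x‖ ^ 2)
            - (∫ x, (∑ j, b j x * pdC u j x) * star (u x)).re
            - ∫ x, (c x).re * ‖u x‖ ^ 2) ↔
      ((∀ h : (Fin n → ℝ) → ℝ, IsTestR h → 0 ≤ Q h) ∧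
        (∀ u v : (Fin n → ℝ) → ℝ, IsTestR u → IsTestR v →
          |∫ x, ∑ j, d j x * (u x * pdR v j x - v x * pdR u j x)| ≤
            Real.sqrt (Q u) * Real.sqrt (Q v))) := by
  constructor
  · intro hA
    have hscale : ∀ (uu vv : (Fin n → ℝ) → ℝ), IsTestR uu → IsTestR vv → ∀ t s : ℝ,
        0 ≤ t ^ 2 * Q uu + s ^ 2 * Q vv
          + 2 * t * s * ∫ x, ∑ j, d j x * (uu x * pdR vv j x - vv x * pdR uu j x) := by
      intro uu vv huu hvv t s
      have hfu : IsTestR (fun x => t * uu x) := AccAux.isTestR_const_mul t huu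
      have hgv : IsTestR (fun x => s * vv x) := AccAux.isTestR_const_mul s hvv
      set U : (Fin n → ℝ) → ℂ :=
        fun x => ((t * uu x : ℝ) : ℂ) + ((s * vv x : ℝ) : ℂ) * Complex.I with hU
      have hUtest : IsTestC U := AccAux.isTestC_mk hfu hgv
      have hkey := AccAux.key hbloc hcloc hgloc hgder hq hd hQ U hUtest
      have hre : ∀ x, (U x).re = t * uu x := fun x => by simp [hU]
      have him : ∀ x, (U x).im = s * vv x := fun x => by simp [hU]
      have hineq := hA U hUtest
      rw [hkey] at hineq
      simp only [hre, him] at hineq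
      rw [AccAux.Q_scale hQ t huu, AccAux.Q_scale hQ s hvv,
        AccAux.D_scale t s huu hvv] at hineq
      linarith
    have hi : ∀ h : (Fin n → ℝ) → ℝ, IsTestR h → 0 ≤ Q h := by
      intro h hh
      have := hscale h h hh hh 1 0
      nlinarith [this]
    refine ⟨hi, ?_⟩
    intro uu vv huu hvv
    exact AccAux.aux_ineq (Q uu) (Q vv) _ (hi uu huu) (hi vv hvv)
      (fun t s => hscale uu vv huu hvv t s)
  · rintro ⟨h1, h2⟩ u hu
    rw [AccAux.key hbloc hcloc hgloc hgder hq hd hQ u hu]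
    have hf : IsTestR (fun x => (u x).re) := AccAux.isTestR_re hu
    have hgg : IsTestR (fun x => (u x).im) := AccAux.isTestR_im hu
    have ha := h1 _ hf
    have hb := h1 _ hgg
    have hD := h2 _ _ hf hgg
    have hsa := Real.sq_sqrt ha
    have hsb := Real.sq_sqrt hb
    have habs := abs_le.mp hD
    nlinarith [habs.1, habs.2, hsa, hsb,
      sq_nonneg (Real.sqrt (Q (fun x => (u x).re)) - Real.sqrt (Q (fun x => (u x).im)))]
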